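/- Consider the 1D interface problem with two blocks, where Q = e_I⁻ (p_I⁻)ᵀ − e_I⁺ (p_I⁺)ᵀ. Along solutions of the penalized interface system (with penalty parameters τ⁻, τ⁺, σ⁻, σ⁺), the discrete energy E = (1/2)Pᵀ A_P P + (1/2)Vᵀ A_V V satisfies E' = (−1−τ⁻−σ⁻)(Pᵀe_I⁻)((p_I⁻)ᵀV) + (τ⁻−σ⁺)(Pᵀe_I⁻)((p_I⁺)ᵀV) + (−τ⁺+σ⁻)(Pᵀe_I⁺)((p_I⁻)ᵀV) + (1+τ⁺+σ⁺)(Pᵀe_I⁺)((p_I⁺)ᵀV). In particular, if τ⁻ = τ⁺ = σ⁻ = σ⁺ = −1/2 then E' = 0. -/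

import Mathlib

/-!
Differentiating the energy and inserting the two semi-discrete equations, the volume terms
combine into `Pᵀ (A_P D_V + (A_V D_P)ᵀ) V = Pᵀ Q V`, which by the summation-by-parts property
only sees the interface values: `(Pᵀe_I⁻)((p_I⁻)ᵀV) − (Pᵀe_I⁺)((p_I⁺)ᵀV)`. The penalty terms
contribute further products of the same four interface quantities, and with all penalty
parameters equal to `−1/2` the coefficients cancel.
-/

open Matrix

section Calculus

variable {𝕜 : Type*} [NontriviallyNormedField 𝕜] {n : Type*} [Fintype n]
  {f g : 𝕜 → n → 𝕜} {f' g' : n → 𝕜} {t : 𝕜}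

theorem HasDerivAt.dotProduct (hf : HasDerivAt f f' t) (hg : HasDerivAt g g' t) :
    HasDerivAt (fun s => f s ⬝ᵥ g s) (f' ⬝ᵥ g t + f t ⬝ᵥ g') t :=
  (HasDerivAt.fun_sum (u := Finset.univ) fun i _ =>
    (hasDerivAt_pi.mp hf i).mul (hasDerivAt_pi.mp hg i)).congr_deriv Finset.sum_add_distrib

theorem HasDerivAt.mulVec {m : Type*} (A : Matrix m n 𝕜) (hf : HasDerivAt f f' t) :
    HasDerivAt (fun s => A *ᵥ f s) (A *ᵥ f') t :=
  hasDerivAt_pi.mpr fun i =>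
    HasDerivAt.fun_sum fun j _ => (hasDerivAt_pi.mp hf j).const_mul (A i j)

theorem HasDerivAt.half_dotProduct_mulVec_self [CharZero 𝕜] {A : Matrix n n 𝕜} (hA : A.IsSymm)
    (hf : HasDerivAt f f' t) :
    HasDerivAt (fun s => (1 / 2) * (f s ⬝ᵥ A *ᵥ f s)) (f t ⬝ᵥ A *ᵥ f') t := by
  refine ((hf.dotProduct (hf.mulVec A)).const_mul (1 / 2)).congr_deriv ?_
  rw [← dotProduct_transpose_mulVec A (f t) f', hA.eq]
  ring

end Calculus

section Algebra

variable {R : Type*} [CommRing R] {m n : Type*} [Fintype m] [Fintype n]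

theorem dotProduct_mulVec_add_dotProduct_mulVec (B : Matrix m n R) (C : Matrix n m R)
    (u : m → R) (v : n → R) : u ⬝ᵥ B *ᵥ v + v ⬝ᵥ C *ᵥ u = u ⬝ᵥ (B + Cᵀ) *ᵥ v := by
  rw [add_mulVec, dotProduct_add, dotProduct_transpose_mulVec]

theorem dotProduct_vecMulVec_mulVec (u a : m → R) (b v : n → R) :
    u ⬝ᵥ vecMulVec a b *ᵥ v = (u ⬝ᵥ a) * (b ⬝ᵥ v) := by
  rw [vecMulVec_mulVec, dotProduct_comm, op_smul_eq_smul, smul_dotProduct,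
    smul_eq_mul, dotProduct_comm a, mul_comm]

theorem interface_energy_rate (AP : Matrix m m R) (AV : Matrix n n R)
    (DV : Matrix m n R) (DP : Matrix n m R) (eIm eIp : m → R) (pIm pIp : n → R)
    (hQ : AP * DV + (AV * DP)ᵀ = vecMulVec eIm pIm - vecMulVec eIp pIp)
    (τm τp σm σp : R) (P P' : m → R) (V V' : n → R)
    (hPode : AP *ᵥ P' = -((AP * DV) *ᵥ V) + ((pIp ⬝ᵥ V) - (pIm ⬝ᵥ V)) • (τm • eIm + τp • eIp))
    (hVode : AV *ᵥ V' = -((AV * DP) *ᵥ P) + ((eIp ⬝ᵥ P) - (eIm ⬝ᵥ P)) • (σm • pIm + σp • pIp)) :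
    P ⬝ᵥ AP *ᵥ P' + V ⬝ᵥ AV *ᵥ V' =
      (-1 - τm - σm) * (P ⬝ᵥ eIm) * (pIm ⬝ᵥ V) + (τm - σp) * (P ⬝ᵥ eIm) * (pIp ⬝ᵥ V)
        + (-τp + σm) * (P ⬝ᵥ eIp) * (pIm ⬝ᵥ V) + (1 + τp + σp) * (P ⬝ᵥ eIp) * (pIp ⬝ᵥ V) := by
  have hsbp : P ⬝ᵥ (AP * DV) *ᵥ V + V ⬝ᵥ (AV * DP) *ᵥ P =
      (P ⬝ᵥ eIm) * (pIm ⬝ᵥ V) - (P ⬝ᵥ eIp) * (pIp ⬝ᵥ V) := by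
    rw [dotProduct_mulVec_add_dotProduct_mulVec, hQ, sub_mulVec, dotProduct_sub,
      dotProduct_vecMulVec_mulVec, dotProduct_vecMulVec_mulVec]
  rw [hPode, hVode]
  simp only [dotProduct_add, dotProduct_neg, dotProduct_smul, smul_eq_mul]
  rw [dotProduct_comm eIm, dotProduct_comm eIp, dotProduct_comm V pIm, dotProduct_comm V pIp]
  linear_combination -hsbp

end Algebra

theorem stmt4_general {NP NV : ℕ}
    (AP : Matrix (Fin NP) (Fin NP) ℝ) (AV : Matrix (Fin NV) (Fin NV) ℝ)
    (DV : Matrix (Fin NP) (Fin NV) ℝ) (DP : Matrix (Fin NV) (Fin NP) ℝ)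
    (hAP : AP.PosDef) (hAV : AV.PosDef)
    (eIm eIp : Fin NP → ℝ)
    (pIm pIp : Fin NV → ℝ)
    (hQ : AP * DV + (AV * DP)ᵀ = vecMulVec eIm pIm - vecMulVec eIp pIp)
    (τm τp σm σp : ℝ)
    (P : ℝ → Fin NP → ℝ) (V : ℝ → Fin NV → ℝ)
    (P' : ℝ → Fin NP → ℝ) (V' : ℝ → Fin NV → ℝ)
    (hP : ∀ t, HasDerivAt P (P' t) t) (hV : ∀ t, HasDerivAt V (V' t) t)
    (hPode : ∀ t, AP.mulVec (P' t) = -((AP * DV).mulVec (V t))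
      + ((pIp ⬝ᵥ V t) - (pIm ⬝ᵥ V t)) • (τm • eIm + τp • eIp))
    (hVode : ∀ t, AV.mulVec (V' t) = -((AV * DP).mulVec (P t))
      + ((eIp ⬝ᵥ P t) - (eIm ⬝ᵥ P t)) • (σm • pIm + σp • pIp)) :
    (∀ t, HasDerivAt
      (fun s => (1/2) * (P s ⬝ᵥ AP.mulVec (P s)) + (1/2) * (V s ⬝ᵥ AV.mulVec (V s)))
      ((-1 - τm - σm) * (P t ⬝ᵥ eIm) * (pIm ⬝ᵥ V t)
        + (τm - σp) * (P t ⬝ᵥ eIm) * (pIp ⬝ᵥ V t)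
        + (-τp + σm) * (P t ⬝ᵥ eIp) * (pIm ⬝ᵥ V t)
        + (1 + τp + σp) * (P t ⬝ᵥ eIp) * (pIp ⬝ᵥ V t)) t) ∧
    ((τm = -1/2 ∧ τp = -1/2 ∧ σm = -1/2 ∧ σp = -1/2) →
      ∀ t, HasDerivAt
        (fun s => (1/2) * (P s ⬝ᵥ AP.mulVec (P s)) + (1/2) * (V s ⬝ᵥ AV.mulVec (V s)))
        0 t) := by
  have hsymP : AP.IsSymm := isHermitian_iff_isSymm.mp hAP.isHermitian
  have hsymV : AV.IsSymm := isHermitian_iff_isSymm.mp hAV.isHermitian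
  have hrate := fun t =>
    (((hP t).half_dotProduct_mulVec_self hsymP).fun_add
      ((hV t).half_dotProduct_mulVec_self hsymV)).congr_deriv
      (interface_energy_rate AP AV DV DP eIm eIp pIm pIp hQ τm τp σm σp _ _ _ _
        (hPode t) (hVode t))
  refine ⟨hrate, ?_⟩
  rintro ⟨rfl, rfl, rfl, rfl⟩ t
  exact (hrate t).congr_deriv (by ring)

/-- Energy rate for the 1D SAT-penalized interface system, and conservation for
    τ⁻ = τ⁺ = σ⁻ = σ⁺ = -1/2. -/
theorem stmt4 {NP NV : ℕ}
    (AP : Matrix (Fin NP) (Fin NP) ℝ) (AV : Matrix (Fin NV) (Fin NV) ℝ)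
    (DV : Matrix (Fin NP) (Fin NV) ℝ) (DP : Matrix (Fin NV) (Fin NP) ℝ)
    (hAP : AP.PosDef) (hAV : AV.PosDef)
    (eIm eIp : Fin NP → ℝ) (iM iP : Fin NP) (hiM : eIm = Pi.single iM 1)
    (hiP : eIp = Pi.single iP 1)
    (pIm pIp : Fin NV → ℝ)
    (hQ : AP * DV + (AV * DP)ᵀ = vecMulVec eIm pIm - vecMulVec eIp pIp)
    (τm τp σm σp : ℝ)
    (P : ℝ → Fin NP → ℝ) (V : ℝ → Fin NV → ℝ)
    (P' : ℝ → Fin NP → ℝ) (V' : ℝ → Fin NV → ℝ)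
    (hP : ∀ t, HasDerivAt P (P' t) t) (hV : ∀ t, HasDerivAt V (V' t) t)
    (hPode : ∀ t, AP.mulVec (P' t) = -((AP * DV).mulVec (V t))
      + ((pIp ⬝ᵥ V t) - (pIm ⬝ᵥ V t)) • (τm • eIm + τp • eIp))
    (hVode : ∀ t, AV.mulVec (V' t) = -((AV * DP).mulVec (P t))
      + ((eIp ⬝ᵥ P t) - (eIm ⬝ᵥ P t)) • (σm • pIm + σp • pIp)) :
    (∀ t, HasDerivAt
      (fun s => (1/2) * (P s ⬝ᵥ AP.mulVec (P s)) + (1/2) * (V s ⬝ᵥ AV.mulVec (V s)))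
      ((-1 - τm - σm) * (P t ⬝ᵥ eIm) * (pIm ⬝ᵥ V t)
        + (τm - σp) * (P t ⬝ᵥ eIm) * (pIp ⬝ᵥ V t)
        + (-τp + σm) * (P t ⬝ᵥ eIp) * (pIm ⬝ᵥ V t)
        + (1 + τp + σp) * (P t ⬝ᵥ eIp) * (pIp ⬝ᵥ V t)) t) ∧
    ((τm = -1/2 ∧ τp = -1/2 ∧ σm = -1/2 ∧ σp = -1/2) →
      ∀ t, HasDerivAt
        (fun s => (1/2) * (P s ⬝ᵥ AP.mulVec (P s)) + (1/2) * (V s ⬝ᵥ AV.mulVec (V s)))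
        0 t) :=
  stmt4_general AP AV DV DP hAP hAV eIm eIp pIm pIp hQ τm τp σm σp P V P' V' hP hV hPode hVode
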